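/- In a tree Ising model with maximum degree D, leaves L, root r, and edge parameters satisfying |θ_{ij}| < (log 2)/(2D) for all edges, one has |P(x_r | x_L) − P(x_r)| < exp(−(log 2)/3 · d(r,L)) for all x_r ∈ {−1,1} and all leaf configurations x_L, where d(r,L) is the distance from r to the nearest leaf. -/

import Mathlib

/-!
Root the tree at `r`. For a vertex `u` entered from its parent `p`, let `R_u` be the log-ratio
`log (Z_u(+1) / Z_u(-1))` of the partition functions of the subtree below `u`, with the leaves in
that subtree conditioned on `x_L` and the spin of `u` fixed. The subtree splits at `u` into the
subtrees of the children `w`, joined to `u` by single edges, so `Z_u(ε)` is the product of the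
messages `∑_s e^{θ_{uw} ε s} Z_w(s)` and `R_u = ∑_w f_{θ_{uw}}(R_w)` for an explicit map `f_t`.
Always `|f_t| ≤ 2|t|`, and `f_t` is `|t|`-Lipschitz, its derivative being a difference of two
sigmoids at distance `4t`. With at most `D` children per vertex and all `|θ| ≤ κ`, induction on the
distance to the nearest leaf gives `|R_u| ≤ 2 (Dκ)^{d(u,L)}`, which for `κ = log 2 / (2D)` is
`2 (log 2 / 2)^{d(u,L)}`. Finally `P(x_r | x_L) = sigmoid (x_r R_r)`, `P(x_r) = 1/2` by spin-flip
symmetry, and the sigmoid is `1/4`-Lipschitz.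
-/

/-- Spin value of a Boolean configuration entry: `true ↦ +1`, `false ↦ −1`. -/
noncomputable def val (b : Bool) : ℝ := if b then 1 else -1

/-- Unnormalized Ising weight `∏_{edges {u,v}} exp(θ_{uv} x_u x_v)` of a configuration. -/
noncomputable def isingWeight {V : Type*} [Fintype V] [LinearOrder V]
    (G : SimpleGraph V) [DecidableRel G.Adj] (θ : V → V → ℝ) (σ : V → Bool) : ℝ :=
  ∏ p ∈ Finset.univ.filter (fun p : V × V => p.1 < p.2 ∧ G.Adj p.1 p.2),
    Real.exp (θ p.1 p.2 * val (σ p.1) * val (σ p.2))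

/-- Conditional probability `P(X_r = b | X_L = y|_L)` in the Ising model on `G`. -/
noncomputable def condRootProb {V : Type*} [Fintype V] [LinearOrder V]
    (G : SimpleGraph V) [DecidableRel G.Adj] (θ : V → V → ℝ)
    (r : V) (L : Finset V) (b : Bool) (y : V → Bool) : ℝ :=
  (∑ σ : V → Bool, if (∀ v ∈ L, σ v = y v) ∧ σ r = b then isingWeight G θ σ else 0) /
    (∑ σ : V → Bool, if ∀ v ∈ L, σ v = y v then isingWeight G θ σ else 0)

/-- Marginal probability `P(X_r = b)` in the Ising model on `G`. -/
noncomputable def rootMarg {V : Type*} [Fintype V] [LinearOrder V]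
    (G : SimpleGraph V) [DecidableRel G.Adj] (θ : V → V → ℝ) (r : V) (b : Bool) : ℝ :=
  (∑ σ : V → Bool, if σ r = b then isingWeight G θ σ else 0) /
    (∑ σ : V → Bool, isingWeight G θ σ)

namespace SimpleGraph

variable {V : Type*} {G : SimpleGraph V}

lemma Connected.exists_adj_dist_eq_add_one (hG : G.Connected) {u v : V} (huv : u ≠ v) :
    ∃ w, G.Adj u w ∧ G.dist u v = G.dist w v + 1 := by
  obtain ⟨p, hp⟩ := hG.exists_walk_length_eq_dist u v
  cases p with
  | nil => exact absurd rfl huv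
  | @cons _ w _ huw q =>
    have h₁ : G.dist w v ≤ q.length := dist_le q
    have h₂ : G.dist u v ≤ G.dist u w + G.dist w v := hG.dist_triangle
    rw [dist_eq_one_iff_adj.mpr huw] at h₂
    rw [Walk.length_cons] at hp
    exact ⟨w, huw, by omega⟩

lemma IsTree.eq_of_adj_of_dist_eq_add_one (hG : G.IsTree) {u a b v : V} (ha : G.Adj u a)
    (hb : G.Adj u b) (hav : G.dist u v = G.dist a v + 1) (hbv : G.dist u v = G.dist b v + 1) :
    a = b := by
  have shortest : ∀ {c} (hc : G.Adj u c), G.dist u v = G.dist c v + 1 →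
      ∃ r : G.Walk u v, r.IsPath ∧ r.snd = c := fun {c} hc hcv => by
    obtain ⟨q, hq⟩ := hG.connected.exists_walk_length_eq_dist c v
    exact ⟨.cons hc q, Walk.isPath_of_length_eq_dist _ (by simp [hq, hcv]), by simp⟩
  obtain ⟨p, hp, rfl⟩ := shortest ha hav
  obtain ⟨q, hq, rfl⟩ := shortest hb hbv
  exact congrArg (fun r : G.Path u v => r.1.snd)
    ((hG.isAcyclic.subsingleton_path u v).elim ⟨p, hp⟩ ⟨q, hq⟩)

section Subtree

variable [Fintype V] [DecidableEq V]

/-- The vertices lying beyond `u` when the tree is entered from `p`: the subtree hanging from `u`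
below its parent `p`, and the whole vertex set when `p = u` (`u` is then the root). -/
noncomputable def subtree (G : SimpleGraph V) (p u : V) : Finset V :=
  Finset.univ.filter fun v => p = u ∨ G.dist p v = G.dist u v + 1

@[simp]
lemma subtree_self (u : V) : G.subtree u u = Finset.univ := by
  simp [subtree]

lemma mem_subtree_of_adj {p u v : V} (h : G.Adj p u) :
    v ∈ G.subtree p u ↔ G.dist p v = G.dist u v + 1 := by
  simp [subtree, h.ne]

lemma self_mem_subtree {p u : V} (h : p = u ∨ G.Adj p u) : u ∈ G.subtree p u := by
  rcases h with rfl | h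
  · simp [subtree]
  · simp [mem_subtree_of_adj h, dist_eq_one_iff_adj.mpr h]

lemma notMem_subtree_of_adj {p u : V} (h : G.Adj p u) : p ∉ G.subtree p u := by
  simp [mem_subtree_of_adj h]

lemma eq_of_mem_subtree_of_adj {p u x : V} (hpu : G.Adj p u) (hx : x ∈ G.subtree p u)
    (hpx : G.Adj p x) : u = x := by
  rw [mem_subtree_of_adj hpu, dist_eq_one_iff_adj.mpr hpx, right_eq_add] at hx
  exact (hpu.symm.reachable.trans hpx.reachable).dist_eq_zero_iff.mp hx

lemma IsTree.disjoint_subtree (hG : G.IsTree) {u w w' : V} (hw : G.Adj u w) (hw' : G.Adj u w')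
    (hne : w ≠ w') : Disjoint (G.subtree u w) (G.subtree u w') :=
  Finset.disjoint_left.mpr fun _ hv hv' =>
    hne (hG.eq_of_adj_of_dist_eq_add_one hw hw' ((mem_subtree_of_adj hw).mp hv)
      ((mem_subtree_of_adj hw').mp hv'))

lemma IsTree.mem_subtree_of_adj_of_ne (hG : G.IsTree) {p u x z : V} (hpu : G.Adj p u)
    (hx : x ∈ G.subtree p u) (hxz : G.Adj x z) (hzp : z ≠ p) : z ∈ G.subtree p u := by
  rw [mem_subtree_of_adj hpu] at hx ⊢
  have c₁ := dist_comm (G := G) (u := z) (v := p)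
  have c₂ := dist_comm (G := G) (u := z) (v := u)
  rcases hG.dist_eq_dist_add_one_of_adj z hpu with h | h
  · omega
  exfalso
  -- distances to `p` and `u` change by one along `x — z`, which forces `d(p, z) = d(u, x)`
  have hp := hG.dist_eq_dist_add_one_of_adj p hxz
  have hu := hG.dist_eq_dist_add_one_of_adj u hxz
  have hpz : G.dist p z = G.dist u x := by omega
  rcases eq_or_ne x u with rfl | hxu
  · rw [dist_self] at hpz
    exact hzp (hG.connected.dist_eq_zero_iff.mp (by omega))
  -- the neighbour of `x` towards `u` is then also its neighbour towards `p`, so it is `z`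
  obtain ⟨z', hxz', hz'⟩ := hG.connected.exists_adj_dist_eq_add_one hxu
  have h₁ : G.dist p z' ≤ G.dist p u + G.dist u z' := hG.connected.dist_triangle
  have h₂ : G.dist p x ≤ G.dist p z' + G.dist z' x := hG.connected.dist_triangle
  rw [dist_eq_one_iff_adj.mpr hpu] at h₁
  rw [dist_eq_one_iff_adj.mpr hxz'.symm] at h₂
  have c₃ := dist_comm (G := G) (u := x) (v := p)
  have c₄ := dist_comm (G := G) (u := z') (v := p)
  have c₅ := dist_comm (G := G) (u := x) (v := u)
  have c₆ := dist_comm (G := G) (u := z') (v := u)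
  obtain rfl : z = z' := hG.eq_of_adj_of_dist_eq_add_one (v := p) hxz hxz' (by omega) (by omega)
  omega

variable [DecidableRel G.Adj]

def children (G : SimpleGraph V) [DecidableRel G.Adj] (p u : V) : Finset V :=
  (G.neighborFinset u).erase p

lemma mem_children {p u w : V} : w ∈ G.children p u ↔ w ≠ p ∧ G.Adj u w := by
  simp [children]

lemma IsTree.subtree_eq_insert_biUnion (hG : G.IsTree) {p u : V} (hpu : p = u ∨ G.Adj p u) :
    G.subtree p u = insert u ((G.children p u).biUnion (G.subtree u)) := by
  ext v
  simp only [Finset.mem_insert, Finset.mem_biUnion, mem_children]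
  constructor
  · intro hv
    refine or_iff_not_imp_left.mpr fun hvu => ?_
    obtain ⟨w, huw, hw⟩ := hG.connected.exists_adj_dist_eq_add_one (Ne.symm hvu)
    refine ⟨w, ⟨?_, huw⟩, (mem_subtree_of_adj huw).mpr hw⟩
    rintro rfl
    rcases hpu with rfl | hpu
    · exact huw.ne rfl
    · rw [mem_subtree_of_adj hpu] at hv
      omega
  · rintro (rfl | ⟨w, ⟨hwp, huw⟩, hv⟩)
    · exact self_mem_subtree hpu
    rcases hpu with rfl | hpu
    · simp [subtree]
    rw [mem_subtree_of_adj huw] at hv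
    rw [mem_subtree_of_adj hpu]
    have c₁ := dist_comm (G := G) (u := v) (v := p)
    have c₂ := dist_comm (G := G) (u := v) (v := u)
    rcases hG.dist_eq_dist_add_one_of_adj v hpu with h | h
    · omega
    · exact absurd (hG.eq_of_adj_of_dist_eq_add_one huw hpu.symm hv (by omega)) hwp

lemma IsTree.subtree_subset_subtree (hG : G.IsTree) {p u w : V} (hpu : p = u ∨ G.Adj p u)
    (hw : w ∈ G.children p u) : G.subtree u w ⊆ G.subtree p u := by
  rw [hG.subtree_eq_insert_biUnion hpu]
  exact (Finset.subset_biUnion_of_mem _ hw).trans (Finset.subset_insert _ _)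

end Subtree

end SimpleGraph

section Pinned

variable {α : Type*} [Fintype α] [DecidableEq α]

/-- Spin configurations on `A`, represented as configurations on all of `α` that are `true`
outside `A`. -/
def pinned (A : Finset α) : Finset (α → Bool) :=
  Finset.univ.filter fun σ => ∀ v ∉ A, σ v = true

lemma mem_pinned {A : Finset α} {σ : α → Bool} : σ ∈ pinned A ↔ ∀ v ∉ A, σ v = true := by
  simp [pinned]

@[simp]
lemma pinned_univ : pinned (Finset.univ : Finset α) = Finset.univ := by
  simp [pinned]

lemma sum_pinned_union_mul {R : Type*} [CommSemiring R] {B C : Finset α} (hBC : Disjoint B C)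
    {f g : (α → Bool) → R} (hf : ∀ σ τ, (∀ v ∈ B, σ v = τ v) → f σ = f τ)
    (hg : ∀ σ τ, (∀ v ∈ C, σ v = τ v) → g σ = g τ) :
    ∑ σ ∈ pinned (B ∪ C), f σ * g σ = (∑ σ ∈ pinned B, f σ) * ∑ σ ∈ pinned C, g σ := by
  rw [Finset.sum_mul_sum, ← Finset.sum_product']
  refine Finset.sum_nbij' (fun σ => (B.piecewise σ fun _ => true, C.piecewise σ fun _ => true))
    (fun q => B.piecewise q.1 q.2) ?_ ?_ ?_ ?_ ?_
  · intro σ _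
    simp +contextual [mem_pinned, Finset.piecewise_eq_of_notMem]
  · rintro ⟨σ, τ⟩ h
    simp only [Finset.mem_product, mem_pinned] at h ⊢
    intro v hv
    simp only [Finset.mem_union, not_or] at hv
    rw [Finset.piecewise_eq_of_notMem _ _ _ hv.1, h.2 v hv.2]
  · intro σ hσ
    simp only [mem_pinned, Finset.mem_union, not_or] at hσ
    ext v
    by_cases hB : v ∈ B
    · simp [hB]
    by_cases hC : v ∈ C
    · simp [hB, hC]
    · simp [hB, hC, hσ v ⟨hB, hC⟩]
  · rintro ⟨σ, τ⟩ h
    simp only [Finset.mem_product, mem_pinned] at h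
    ext v
    · by_cases hB : v ∈ B
      · simp [hB]
      · simp [hB, h.1 v hB]
    · by_cases hC : v ∈ C
      · simp [hC, Finset.disjoint_right.mp hBC hC]
      · simp [hC, h.2 v hC]
  · intro σ _
    exact congr_arg₂ (· * ·) (hf _ _ fun v hv => by simp [hv]) (hg _ _ fun v hv => by simp [hv])

end Pinned

section Coupling

variable {V : Type*} [LinearOrder V]

noncomputable def edgeCoupling (θ : V → V → ℝ) (u w : V) : ℝ := θ (min u w) (max u w)

lemma abs_edgeCoupling_le {G : SimpleGraph V} {θ : V → V → ℝ} {κ : ℝ}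
    (hθ : ∀ a b, G.Adj a b → |θ a b| ≤ κ) {u w : V}
    (huw : G.Adj u w) : |edgeCoupling θ u w| ≤ κ := by
  rcases le_total u w with h | h
  · simpa [edgeCoupling, min_eq_left h, max_eq_right h] using hθ u w huw
  · simpa [edgeCoupling, min_eq_right h, max_eq_left h] using hθ w u huw.symm

end Coupling

section PartitionFunction

variable {V : Type*} [Fintype V] [LinearOrder V] (G : SimpleGraph V) [DecidableRel G.Adj]
  (θ : V → V → ℝ) (L : Finset V) (y : V → Bool)

def edgesIn (A : Finset V) : Finset (V × V) :=
  Finset.univ.filter fun p => p.1 < p.2 ∧ G.Adj p.1 p.2 ∧ p.1 ∈ A ∧ p.2 ∈ A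

noncomputable def condWeight (A : Finset V) (σ : V → Bool) : ℝ :=
  (∏ v ∈ L ∩ A, if σ v = y v then 1 else 0) *
    ∏ p ∈ edgesIn G A, Real.exp (θ p.1 p.2 * val (σ p.1) * val (σ p.2))

/-- The partition function `Z_A(x_u = ε | x_{L ∩ A} = y)` of the model restricted to `A`. -/
noncomputable def partFn (A : Finset V) (u : V) (ε : Bool) : ℝ :=
  ∑ σ ∈ pinned A, if σ u = ε then condWeight G θ L y A σ else 0

variable {G θ L y}

lemma condWeight_nonneg (A : Finset V) (σ : V → Bool) : 0 ≤ condWeight G θ L y A σ :=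
  mul_nonneg (Finset.prod_nonneg fun _ _ => by split_ifs <;> norm_num)
    (Finset.prod_nonneg fun _ _ => (Real.exp_pos _).le)

lemma condWeight_congr {A : Finset V} {σ τ : V → Bool} (h : ∀ v ∈ A, σ v = τ v) :
    condWeight G θ L y A σ = condWeight G θ L y A τ := by
  unfold condWeight
  congr 1
  · exact Finset.prod_congr rfl fun v hv => by rw [h v (Finset.mem_inter.mp hv).2]
  · refine Finset.prod_congr rfl fun p hp => ?_
    simp only [edgesIn, Finset.mem_filter] at hp
    rw [h _ hp.2.2.2.1, h _ hp.2.2.2.2]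

lemma partFn_nonneg (G : SimpleGraph V) [DecidableRel G.Adj] (θ : V → V → ℝ) (L : Finset V)
    (y : V → Bool) (A : Finset V) (u : V) (ε : Bool) : 0 ≤ partFn G θ L y A u ε :=
  Finset.sum_nonneg fun σ _ => by split_ifs <;> simp [condWeight_nonneg]

lemma partFn_pos {A : Finset V} {u : V} {ε : Bool} (hu : u ∈ A) (hε : u ∈ L → y u = ε) :
    0 < partFn G θ L y A u ε := by
  let σ₀ : V → Bool := fun v => if v ∈ L ∩ A then y v else if v = u then ε else true
  have hσ₀ : σ₀ ∈ pinned A := mem_pinned.mpr fun v hv => by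
    simp [σ₀, hv, show v ≠ u from fun h => hv (h ▸ hu)]
  have hσ₀u : σ₀ u = ε := by by_cases huL : u ∈ L <;> simp [σ₀, hu, huL, hε]
  refine Finset.sum_pos' (fun σ _ => by split_ifs <;> simp [condWeight_nonneg])
    ⟨σ₀, hσ₀, ?_⟩
  rw [if_pos hσ₀u, condWeight]
  refine mul_pos (Finset.prod_pos fun v hv => ?_) (Finset.prod_pos fun _ _ => Real.exp_pos _)
  rw [if_pos (show σ₀ v = y v from if_pos hv)]
  exact one_pos

lemma partFn_true_add_partFn_false (A : Finset V) (u : V) :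
    partFn G θ L y A u true + partFn G θ L y A u false =
      ∑ σ ∈ pinned A, condWeight G θ L y A σ := by
  rw [partFn, partFn, ← Finset.sum_add_distrib]
  refine Finset.sum_congr rfl fun σ _ => ?_
  cases σ u <;> simp

lemma partFn_true_add_partFn_false_pos {A : Finset V} {u : V} (hu : u ∈ A) :
    0 < partFn G θ L y A u true + partFn G θ L y A u false := by
  have hpos := partFn_pos (G := G) (θ := θ) (L := L) (ε := y u) hu fun _ => rfl
  have h₀ := partFn_nonneg G θ L y A u true
  have h₁ := partFn_nonneg G θ L y A u false
  cases hy : y u <;> rw [hy] at hpos <;> linarith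

lemma partFn_singleton {u : V} (hu : u ∉ L) (ε : Bool) : partFn G θ L y {u} u ε = 1 := by
  have hweight : ∀ σ, condWeight G θ L y {u} σ = 1 := fun σ => by
    have hL : L ∩ {u} = ∅ := Finset.inter_singleton_of_notMem hu
    have hE : edgesIn G {u} = ∅ := by
      ext p
      simp only [edgesIn, Finset.mem_filter, Finset.mem_singleton, Finset.notMem_empty,
        iff_false]
      rintro ⟨-, hlt, -, h₁, h₂⟩
      exact hlt.ne (h₁.trans h₂.symm)
    simp [condWeight, hL, hE]
  simp only [partFn, hweight]
  rw [Finset.sum_eq_single_of_mem (Function.update (fun _ => true) u ε)]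
  · simp
  · exact mem_pinned.mpr fun v hv => by simp [Finset.mem_singleton.not.mp hv]
  · intro σ hσ hne
    refine if_neg fun hσu => hne (funext fun v => ?_)
    rcases eq_or_ne v u with rfl | hv
    · simp [hσu]
    · simp [hv, mem_pinned.mp hσ v (Finset.notMem_singleton.mpr hv)]

end PartitionFunction

section Factorization

variable {V : Type*} [Fintype V] [LinearOrder V] {G : SimpleGraph V} [DecidableRel G.Adj]
  {θ : V → V → ℝ} {L : Finset V} {y : V → Bool}

variable {B C : Finset V} {u w : V}

lemma edgesIn_union (huw : G.Adj u w) (hu : u ∈ B) (hw : w ∈ C)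
    (hcross : ∀ a ∈ B, ∀ c ∈ C, G.Adj a c → a = u ∧ c = w) :
    edgesIn G (B ∪ C) = insert (min u w, max u w) (edgesIn G B ∪ edgesIn G C) := by
  ext ⟨a, c⟩
  simp only [edgesIn, Finset.mem_insert, Finset.mem_union, Finset.mem_filter, Finset.mem_univ,
    true_and, Prod.mk.injEq]
  constructor
  · rintro ⟨hac, hadj, ha | ha, hc | hc⟩
    · exact Or.inr (Or.inl ⟨hac, hadj, ha, hc⟩)
    · obtain ⟨rfl, rfl⟩ := hcross a ha c hc hadj
      exact Or.inl ⟨(min_eq_left hac.le).symm, (max_eq_right hac.le).symm⟩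
    · obtain ⟨rfl, rfl⟩ := hcross c hc a ha hadj.symm
      exact Or.inl ⟨(min_eq_right hac.le).symm, (max_eq_left hac.le).symm⟩
    · exact Or.inr (Or.inr ⟨hac, hadj, ha, hc⟩)
  · rintro (⟨rfl, rfl⟩ | ⟨hac, hadj, ha, hc⟩ | ⟨hac, hadj, ha, hc⟩)
    · rcases lt_or_gt_of_ne huw.ne with h | h
      · simp [min_eq_left h.le, max_eq_right h.le, h, huw, hu, hw]
      · simp [min_eq_right h.le, max_eq_left h.le, h, huw.symm, hu, hw]
    · exact ⟨hac, hadj, Or.inl ha, Or.inl hc⟩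
    · exact ⟨hac, hadj, Or.inr ha, Or.inr hc⟩

lemma condWeight_union (hBC : Disjoint B C) (huw : G.Adj u w) (hu : u ∈ B) (hw : w ∈ C)
    (hcross : ∀ a ∈ B, ∀ c ∈ C, G.Adj a c → a = u ∧ c = w) (σ : V → Bool) :
    condWeight G θ L y (B ∪ C) σ = condWeight G θ L y B σ * condWeight G θ L y C σ *
      Real.exp (edgeCoupling θ u w * val (σ u) * val (σ w)) := by
  have hE : Disjoint (edgesIn G B) (edgesIn G C) := by
    simp only [edgesIn]
    exact Finset.disjoint_filter_filter' _ _ fun _ hB hC p hp =>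
      Finset.disjoint_left.mp hBC (hB p hp).2.2.1 (hC p hp).2.2.1
  have hnew : (min u w, max u w) ∉ edgesIn G B ∪ edgesIn G C := by
    simp only [edgesIn, Finset.mem_union, Finset.mem_filter]
    rcases le_total u w with h | h
    · simp only [min_eq_left h, max_eq_right h]
      exact fun h' => h'.elim (fun h' => Finset.disjoint_left.mp hBC h'.2.2.2.2 hw)
        fun h' => Finset.disjoint_left.mp hBC hu h'.2.2.2.1
    · simp only [min_eq_right h, max_eq_left h]
      exact fun h' => h'.elim (fun h' => Finset.disjoint_left.mp hBC h'.2.2.2.1 hw)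
        fun h' => Finset.disjoint_left.mp hBC hu h'.2.2.2.2
  have hcoupling : θ (min u w) (max u w) * val (σ (min u w)) * val (σ (max u w)) =
      edgeCoupling θ u w * val (σ u) * val (σ w) := by
    rcases le_total u w with h | h
    · simp [edgeCoupling, min_eq_left h, max_eq_right h]
    · simp only [edgeCoupling, min_eq_right h, max_eq_left h]; ring
  rw [condWeight, condWeight, condWeight, Finset.inter_union_distrib_left,
    Finset.prod_union (hBC.mono Finset.inter_subset_right Finset.inter_subset_right),
    edgesIn_union huw hu hw hcross, Finset.prod_insert hnew, Finset.prod_union hE, hcoupling]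
  ring

lemma partFn_union (hBC : Disjoint B C) (huw : G.Adj u w) (hu : u ∈ B) (hw : w ∈ C)
    (hcross : ∀ a ∈ B, ∀ c ∈ C, G.Adj a c → a = u ∧ c = w) (ε : Bool) :
    partFn G θ L y (B ∪ C) u ε = partFn G θ L y B u ε *
      ∑ b, Real.exp (edgeCoupling θ u w * val ε * val b) * partFn G θ L y C w b := by
  set t := edgeCoupling θ u w
  have hsplit : ∀ σ, (if σ u = ε then condWeight G θ L y (B ∪ C) σ else 0) =
      (if σ u = ε then condWeight G θ L y B σ else 0) *
        (Real.exp (t * val ε * val (σ w)) * condWeight G θ L y C σ) := fun σ => by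
    split_ifs with h
    · rw [condWeight_union hBC huw hu hw hcross, h]; ring
    · rw [zero_mul]
  rw [partFn, Finset.sum_congr rfl fun σ _ => hsplit σ, sum_pinned_union_mul hBC
    (fun σ τ h => by rw [h u hu, condWeight_congr h])
    (fun σ τ h => by rw [h w hw, condWeight_congr h])]
  congr 1
  simp only [partFn, Finset.mul_sum, ← Finset.sum_add_distrib, Fintype.sum_bool]
  refine Finset.sum_congr rfl fun σ _ => ?_
  cases σ w <;> simp

end Factorization

section Flip

variable {V : Type*} [Fintype V] [LinearOrder V] {G : SimpleGraph V} [DecidableRel G.Adj]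
  {θ : V → V → ℝ} {L : Finset V} {y : V → Bool}

lemma val_not (b : Bool) : val (!b) = -val b := by
  cases b <;> simp [val]

lemma partFn_not {A : Finset V} {u : V} (hLA : Disjoint L A) (hu : u ∈ A) (ε : Bool) :
    partFn G θ L y A u (!ε) = partFn G θ L y A u ε := by
  let φ : (V → Bool) → (V → Bool) := fun σ => A.piecewise (fun v => !σ v) σ
  have hφφ : ∀ σ, φ (φ σ) = σ := fun σ => funext fun v => by
    by_cases hv : v ∈ A <;> simp [φ, hv]
  have hφ : ∀ σ ∈ pinned A, φ σ ∈ pinned A := fun σ hσ =>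
    mem_pinned.mpr fun v hv => by simp [φ, hv, mem_pinned.mp hσ v hv]
  have hweight : ∀ σ, condWeight G θ L y A (φ σ) = condWeight G θ L y A σ := fun σ => by
    simp only [condWeight, Finset.disjoint_iff_inter_eq_empty.mp hLA, Finset.prod_empty]
    refine congrArg _ (Finset.prod_congr rfl fun p hp => ?_)
    simp only [edgesIn, Finset.mem_filter] at hp
    simp [φ, hp.2.2.2.1, hp.2.2.2.2, val_not]
  refine Finset.sum_nbij' φ φ hφ hφ (fun σ _ => hφφ σ) (fun σ _ => hφφ σ) fun σ _ => ?_
  rw [hweight σ]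
  simp only [φ, Finset.piecewise_eq_of_mem _ _ _ hu]
  cases σ u <;> cases ε <;> rfl

end Flip

section TreeRecursion

variable {V : Type*} [Fintype V] [LinearOrder V] {G : SimpleGraph V} [DecidableRel G.Adj]
  {θ : V → V → ℝ} {L : Finset V} {y : V → Bool}

open SimpleGraph

lemma partFn_insert_biUnion_insert (hG : G.IsTree) {u w : V} {S : Finset V}
    (hS : ∀ x ∈ S, G.Adj u x) (huw : G.Adj u w) (hwS : w ∉ S) (ε : Bool) :
    partFn G θ L y (insert u ((insert w S).biUnion (G.subtree u))) u ε =
      partFn G θ L y (insert u (S.biUnion (G.subtree u))) u ε *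
        ∑ b, Real.exp (edgeCoupling θ u w * val ε * val b) *
          partFn G θ L y (G.subtree u w) w b := by
  have hdisj : ∀ x ∈ S, Disjoint (G.subtree u x) (G.subtree u w) := fun x hx =>
    hG.disjoint_subtree (hS x hx) huw fun h => hwS (h ▸ hx)
  have hBC : Disjoint (insert u (S.biUnion (G.subtree u))) (G.subtree u w) :=
    Finset.disjoint_insert_left.mpr
      ⟨notMem_subtree_of_adj huw, (Finset.disjoint_biUnion_left _ _ _).mpr hdisj⟩
  have hcross : ∀ a ∈ insert u (S.biUnion (G.subtree u)), ∀ c ∈ G.subtree u w, G.Adj a c →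
      a = u ∧ c = w := by
    intro a ha c hc hac
    rcases Finset.mem_insert.mp ha with rfl | ha
    · exact ⟨rfl, (eq_of_mem_subtree_of_adj huw hc hac).symm⟩
    obtain ⟨x, hx, hax⟩ := Finset.mem_biUnion.mp ha
    have hcu : c ≠ u := fun h => notMem_subtree_of_adj huw (h ▸ hc)
    exact absurd hc (Finset.disjoint_left.mp (hdisj x hx)
      (hG.mem_subtree_of_adj_of_ne (hS x hx) hax hac hcu))
  rw [Finset.biUnion_insert, Finset.union_comm, ← Finset.insert_union,
    partFn_union hBC huw (Finset.mem_insert_self _ _) (self_mem_subtree (Or.inr huw)) hcross]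

lemma partFn_insert_biUnion (hG : G.IsTree) {u : V} (hu : u ∉ L) {S : Finset V}
    (hS : ∀ x ∈ S, G.Adj u x) (ε : Bool) :
    partFn G θ L y (insert u (S.biUnion (G.subtree u))) u ε = ∏ w ∈ S,
      ∑ b, Real.exp (edgeCoupling θ u w * val ε * val b) * partFn G θ L y (G.subtree u w) w b := by
  induction S using Finset.induction_on with
  | empty => simp [partFn_singleton hu]
  | insert w S hwS ih =>
    have hS' : ∀ x ∈ S, G.Adj u x := fun x hx => hS x (Finset.mem_insert_of_mem hx)
    rw [partFn_insert_biUnion_insert hG hS' (hS w (Finset.mem_insert_self w S)) hwS,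
      ih hS', Finset.prod_insert hwS, mul_comm]

end TreeRecursion

namespace Real

lemma abs_sigmoid_sub_sigmoid_le (a b : ℝ) : |sigmoid a - sigmoid b| ≤ |a - b| / 4 := by
  have hbound : ∀ x ∈ Set.univ, ‖sigmoid x * (1 - sigmoid x)‖ ≤ 1 / 4 := fun x _ => by
    have h₀ := sigmoid_nonneg x
    have h₁ := sigmoid_le_one x
    rw [norm_eq_abs, abs_of_nonneg (mul_nonneg h₀ (by linarith))]
    nlinarith [sq_nonneg (sigmoid x - 1 / 2)]
  have := convex_univ.norm_image_sub_le_of_norm_hasDerivWithin_le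
    (fun x _ => (hasDerivAt_sigmoid x).hasDerivWithinAt) hbound (Set.mem_univ b) (Set.mem_univ a)
  simp only [norm_eq_abs] at this
  linarith

lemma hasDerivAt_log_one_add_exp (x : ℝ) :
    HasDerivAt (fun x => log (1 + exp x)) (sigmoid x) x := by
  convert ((hasDerivAt_exp x).const_add 1).log (by positivity) using 1
  rw [sigmoid_def, exp_neg]
  field_simp
  ring

end Real

section Messages

open Real

/-- The ratio of the messages `∑_s e^{t ε s} Z(s)`, `ε = ±1`, sent across an edge of coupling `t`
by a subtree with partition functions `a = Z(+1)` and `b = Z(-1)`. -/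
noncomputable def msgRatio (t a b : ℝ) : ℝ :=
  (exp t * a + exp (-t) * b) / (exp (-t) * a + exp t * b)

lemma exp_mul_add_exp_mul_pos (s s' : ℝ) {a b : ℝ} (ha : 0 ≤ a) (hb : 0 ≤ b) (hab : 0 < a + b) :
    0 < exp s * a + exp s' * b := by
  rcases ha.lt_or_eq with ha | rfl
  · exact add_pos_of_pos_of_nonneg (by positivity) (by positivity)
  · simp only [mul_zero, zero_add] at hab ⊢
    positivity

lemma msgRatio_swap (t a b : ℝ) : msgRatio t b a = (msgRatio t a b)⁻¹ := by
  rw [msgRatio, msgRatio, inv_div]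
  congr 1 <;> ring

lemma log_msgRatio_le (t : ℝ) {a b : ℝ} (ha : 0 ≤ a) (hb : 0 ≤ b) (hab : 0 < a + b) :
    log (msgRatio t a b) ≤ 2 * |t| := by
  have hden := exp_mul_add_exp_mul_pos (-t) t ha hb hab
  have h₁ : exp t ≤ exp (2 * |t|) * exp (-t) := by
    rw [← exp_add]; exact exp_le_exp.mpr (by linarith [le_abs_self t])
  have h₂ : exp (-t) ≤ exp (2 * |t|) * exp t := by
    rw [← exp_add]; exact exp_le_exp.mpr (by linarith [neg_abs_le t])
  rw [msgRatio, log_le_iff_le_exp (div_pos (exp_mul_add_exp_mul_pos t (-t) ha hb hab) hden),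
    div_le_iff₀ hden]
  nlinarith [mul_le_mul_of_nonneg_right h₁ ha, mul_le_mul_of_nonneg_right h₂ hb]

lemma abs_log_msgRatio_le (t : ℝ) {a b : ℝ} (ha : 0 ≤ a) (hb : 0 ≤ b) (hab : 0 < a + b) :
    |log (msgRatio t a b)| ≤ 2 * |t| := by
  have := log_msgRatio_le t hb ha (by linarith)
  rw [msgRatio_swap, log_inv] at this
  exact abs_le.mpr ⟨by linarith, log_msgRatio_le t ha hb hab⟩

lemma log_msgRatio_exp (t l : ℝ) :
    log (msgRatio t (exp l) 1) = log (1 + exp (l + 2 * t)) - log (1 + exp (l - 2 * t)) - 2 * t := by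
  have hnum : exp t * exp l + exp (-t) * 1 = exp (-t) * (1 + exp (l + 2 * t)) := by
    rw [mul_add, ← exp_add, ← exp_add]; ring_nf
  have hden : exp (-t) * exp l + exp t * 1 = exp t * (1 + exp (l - 2 * t)) := by
    rw [mul_add, ← exp_add, ← exp_add]; ring_nf
  rw [msgRatio, hnum, hden, log_div (by positivity) (by positivity), log_mul (by positivity)
    (by positivity), log_mul (by positivity) (by positivity), log_exp, log_exp]
  ring

/-- `l ↦ log (msgRatio t (exp l) 1)` has derivative `sigmoid (l + 2t) - sigmoid (l - 2t)`, of size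
at most `|t|` since the sigmoid is `1/4`-Lipschitz. -/
lemma abs_log_msgRatio_le_mul (t : ℝ) {a b : ℝ} (ha : 0 < a) (hb : 0 < b) :
    |log (msgRatio t a b)| ≤ |t| * |log (a / b)| := by
  let F : ℝ → ℝ := fun l => log (1 + exp (l + 2 * t)) - log (1 + exp (l - 2 * t))
  have hF : ∀ l ∈ Set.univ, HasDerivWithinAt F (sigmoid (l + 2 * t) - sigmoid (l - 2 * t))
      Set.univ l := fun l _ =>
    (((hasDerivAt_log_one_add_exp _).comp l ((hasDerivAt_id l).add_const _)).sub
      ((hasDerivAt_log_one_add_exp _).comp l ((hasDerivAt_id l).sub_const _))).hasDerivWithinAt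
      |>.congr_deriv (by simp)
  have hbound : ∀ l ∈ Set.univ, ‖sigmoid (l + 2 * t) - sigmoid (l - 2 * t)‖ ≤ |t| := fun l _ => by
    have := abs_sigmoid_sub_sigmoid_le (l + 2 * t) (l - 2 * t)
    rw [show l + 2 * t - (l - 2 * t) = 4 * t by ring, abs_mul,
      abs_of_pos (by norm_num : (0 : ℝ) < 4)] at this
    rw [norm_eq_abs]; linarith
  have hmvt := convex_univ.norm_image_sub_le_of_norm_hasDerivWithin_le hF hbound
    (Set.mem_univ 0) (Set.mem_univ (log (a / b)))
  have hF0 : F 0 = 2 * t := by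
    have := log_msgRatio_exp t 0
    rw [exp_zero, msgRatio, mul_one, mul_one, add_comm, div_self (by positivity), log_one]
      at this
    simp only [F]; linarith
  have hratio : msgRatio t a b = msgRatio t (exp (log (a / b))) 1 := by
    rw [exp_log (div_pos ha hb), msgRatio, msgRatio]
    field_simp
  rw [hratio, log_msgRatio_exp]
  simpa [norm_eq_abs, hF0, F] using hmvt

end Messages

section Decay

variable {V : Type*} [Fintype V] [LinearOrder V] {G : SimpleGraph V} [DecidableRel G.Adj]
  {θ : V → V → ℝ} {L : Finset V} {y : V → Bool}

open SimpleGraph Real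

variable (G θ L y) in
noncomputable def subtreeLogRatio (p u : V) : ℝ :=
  log (partFn G θ L y (G.subtree p u) u true / partFn G θ L y (G.subtree p u) u false)

lemma subtreeLogRatio_eq_sum (hG : G.IsTree) {p u : V} (hpu : p = u ∨ G.Adj p u) (hu : u ∉ L) :
    subtreeLogRatio G θ L y p u = ∑ w ∈ G.children p u, log (msgRatio (edgeCoupling θ u w)
      (partFn G θ L y (G.subtree u w) w true) (partFn G θ L y (G.subtree u w) w false)) := by
  have hS : ∀ w ∈ G.children p u, G.Adj u w := fun w hw => (mem_children.mp hw).2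
  rw [subtreeLogRatio, hG.subtree_eq_insert_biUnion hpu, partFn_insert_biUnion hG hu hS,
    partFn_insert_biUnion hG hu hS, ← Finset.prod_div_distrib, log_prod]
  · refine Finset.sum_congr rfl fun w _ => ?_
    simp [val, msgRatio]
  · intro w hw
    have hZ := partFn_true_add_partFn_false_pos (G := G) (θ := θ) (L := L) (y := y)
      (self_mem_subtree (Or.inr (hS w hw)))
    have h₀ := partFn_nonneg G θ L y (G.subtree u w) w true
    have h₁ := partFn_nonneg G θ L y (G.subtree u w) w false
    simp only [Fintype.sum_bool, val, if_true, Bool.false_eq_true, if_false]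
    refine (div_pos ?_ ?_).ne' <;>
      simpa using exp_mul_add_exp_mul_pos _ _ h₀ h₁ hZ

lemma abs_subtreeLogRatio_le_of_forall_children (hG : G.IsTree) {D : ℕ}
    (hdeg : ∀ v, G.degree v ≤ D) {p u : V} (hpu : p = u ∨ G.Adj p u) (hu : u ∉ L) {c : ℝ}
    (hc₀ : 0 ≤ c) (hc : ∀ w ∈ G.children p u, |log (msgRatio (edgeCoupling θ u w)
      (partFn G θ L y (G.subtree u w) w true) (partFn G θ L y (G.subtree u w) w false))| ≤ c) :
    |subtreeLogRatio G θ L y p u| ≤ D * c := by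
  have hcard : ((G.children p u).card : ℝ) ≤ D := by
    exact_mod_cast ((Finset.card_erase_le).trans (G.card_neighborFinset_eq_degree u).le).trans
      (hdeg u)
  rw [subtreeLogRatio_eq_sum hG hpu hu]
  calc _ ≤ ∑ w ∈ G.children p u, c := (Finset.abs_sum_le_sum_abs _ _).trans (Finset.sum_le_sum hc)
    _ = (G.children p u).card * c := by rw [Finset.sum_const, nsmul_eq_mul]
    _ ≤ D * c := mul_le_mul_of_nonneg_right hcard hc₀

theorem abs_subtreeLogRatio_le (hG : G.IsTree) {D : ℕ} (hdeg : ∀ v, G.degree v ≤ D) {κ : ℝ}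
    (hκ : 0 ≤ κ) (hθ : ∀ a b, G.Adj a b → |θ a b| ≤ κ) (m : ℕ) {p u : V}
    (hpu : p = u ∨ G.Adj p u) (hL : ∀ l ∈ L, l ∈ G.subtree p u → m + 1 ≤ G.dist u l) :
    |subtreeLogRatio G θ L y p u| ≤ 2 * (D * κ) ^ (m + 1) := by
  have hu : u ∉ L := fun h => by simpa using hL u h (self_mem_subtree hpu)
  induction m generalizing p u with
  | zero =>
    have := abs_subtreeLogRatio_le_of_forall_children (θ := θ) (y := y) hG hdeg hpu hu
      (by positivity : 0 ≤ 2 * κ) fun w hw => by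
        have huw := (mem_children.mp hw).2
        refine (abs_log_msgRatio_le _ (partFn_nonneg ..) (partFn_nonneg ..)
          (partFn_true_add_partFn_false_pos (self_mem_subtree (Or.inr huw)))).trans ?_
        linarith [abs_edgeCoupling_le hθ huw]
    exact this.trans_eq (by ring)
  | succ k ih =>
    have := abs_subtreeLogRatio_le_of_forall_children (θ := θ) (y := y) hG hdeg hpu hu
      (by positivity : 0 ≤ κ * (2 * (D * κ) ^ (k + 1))) fun w hw => by
        have huw := (mem_children.mp hw).2
        have hwL : w ∉ L := fun h => by
          have := hL w h (hG.subtree_subset_subtree hpu hw (self_mem_subtree (Or.inr huw)))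
          rw [dist_eq_one_iff_adj.mpr huw] at this
          omega
        have hL' : ∀ l ∈ L, l ∈ G.subtree u w → k + 1 ≤ G.dist w l := fun l hl hlw => by
          have := hL l hl (hG.subtree_subset_subtree hpu hw hlw)
          rw [mem_subtree_of_adj huw] at hlw
          omega
        refine (abs_log_msgRatio_le_mul _ (partFn_pos (self_mem_subtree (Or.inr huw))
          fun h => absurd h hwL) (partFn_pos (self_mem_subtree (Or.inr huw))
          fun h => absurd h hwL)).trans ?_
        exact mul_le_mul (abs_edgeCoupling_le hθ huw) (ih (Or.inr huw) hL' hwL)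
          (abs_nonneg _) hκ
    exact this.trans_eq (by ring)

end Decay

section RootMarginal

variable {V : Type*} [Fintype V] [LinearOrder V] {G : SimpleGraph V} [DecidableRel G.Adj]
  {θ : V → V → ℝ} {L : Finset V} {y : V → Bool}

open Real

lemma condRootProb_eq_partFn (r : V) (b : Bool) :
    condRootProb G θ r L b y = partFn G θ L y Finset.univ r b /
      (partFn G θ L y Finset.univ r true + partFn G θ L y Finset.univ r false) := by
  have hweight : ∀ σ, condWeight G θ L y Finset.univ σ =
      if ∀ v ∈ L, σ v = y v then isingWeight G θ σ else 0 := fun σ => by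
    simp [condWeight, edgesIn, isingWeight, Finset.prod_boole]
  rw [partFn_true_add_partFn_false, condRootProb, partFn]
  simp only [pinned_univ, hweight]
  congr 1
  refine Finset.sum_congr rfl fun σ _ => ?_
  by_cases h : σ r = b <;> simp [h]

lemma condRootProb_eq_sigmoid {r : V} (hr : r ∉ L) (b : Bool) :
    condRootProb G θ r L b y = sigmoid (val b * subtreeLogRatio G θ L y r r) := by
  have hpos : ∀ ε, 0 < partFn G θ L y Finset.univ r ε := fun ε =>
    partFn_pos (Finset.mem_univ r) fun h => absurd h hr
  have ht := hpos true
  have hf := hpos false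
  rw [condRootProb_eq_partFn, subtreeLogRatio, SimpleGraph.subtree_self, sigmoid_def]
  cases b
  · rw [val, if_neg Bool.false_ne_true, neg_one_mul, neg_neg, exp_log (div_pos ht hf)]
    field_simp
    ring
  · rw [val, if_pos rfl, one_mul, exp_neg, exp_log (div_pos ht hf)]
    field_simp

lemma rootMarg_eq_half (r : V) (b : Bool) : rootMarg G θ r b = 1 / 2 := by
  have hcond : rootMarg G θ r b = condRootProb G θ r ∅ b fun _ => true := by
    simp [rootMarg, condRootProb]
  have hflip := partFn_not (G := G) (θ := θ) (y := fun _ => true) (Finset.disjoint_empty_left _)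
    (Finset.mem_univ r) false
  have hpos := partFn_pos (G := G) (θ := θ) (y := fun _ => true) (Finset.mem_univ r) (ε := false)
    fun h => absurd h (Finset.notMem_empty r)
  rw [Bool.not_false] at hflip
  rw [hcond, condRootProb_eq_sigmoid (Finset.notMem_empty r), subtreeLogRatio,
    SimpleGraph.subtree_self, hflip, div_self hpos.ne', log_one, mul_zero, sigmoid_zero, one_div]

lemma abs_val (b : Bool) : |val b| = 1 := by
  cases b <;> simp [val]

lemma log_two_div_two_pow_div_two_lt (d : ℕ) : (log 2 / 2) ^ d / 2 < exp (-log 2 / 3 * d) := by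
  have hρ : log 2 / 2 ≤ exp (-log 2 / 3) := by
    linarith [add_one_le_exp (-log 2 / 3), log_two_lt_d9]
  have hle : (log 2 / 2) ^ d ≤ exp (-log 2 / 3 * d) := by
    rw [mul_comm, exp_nat_mul]
    exact pow_le_pow_left₀ (by positivity) hρ d
  have hpos : 0 < (log 2 / 2) ^ d := by positivity
  linarith

end RootMarginal

/-- Correlation decay in a tree Ising model: if the maximum degree is at most `D` and all
edge parameters satisfy `|θ_{ij}| < log 2 / (2D)`, then for all `x_r ∈ {−1,1}` and all leaf
configurations `x_L`, `|P(x_r | x_L) − P(x_r)| < exp(−(log 2)/3 · d(r,L))`, where `d(r,L)`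
is the distance from the root `r` to the nearest leaf. -/
theorem stmt_10 {V : Type*} [Fintype V] [LinearOrder V]
    (G : SimpleGraph V) [DecidableRel G.Adj] (hT : G.IsTree)
    (r : V) (L : Finset V) (hL : ∀ v, v ∈ L ↔ v ≠ r ∧ G.degree v = 1)
    (hLne : L.Nonempty)
    (D : ℕ) (hD : 0 < D) (hdeg : ∀ v, G.degree v ≤ D)
    (θ : V → V → ℝ) (hθ : ∀ p q, G.Adj p q → |θ p q| < Real.log 2 / (2 * (D : ℝ))) :
    ∀ (b : Bool) (y : V → Bool),
      |condRootProb G θ r L b y - rootMarg G θ r b| <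
        Real.exp (-(Real.log 2) / 3 * (L.inf' hLne (fun l => G.dist r l) : ℝ)) := by
  intro b y
  have hr : r ∉ L := fun h => ((hL r).mp h).1 rfl
  set d := L.inf' hLne fun l => G.dist r l
  have hd : 1 ≤ d := Finset.le_inf' hLne _ fun l hl =>
    hT.connected.pos_dist_of_ne fun h => ((hL l).mp hl).1 h.symm
  have hR : |subtreeLogRatio G θ L y r r| ≤ 2 * (Real.log 2 / 2) ^ d := by
    have h := abs_subtreeLogRatio_le (y := y) hT hdeg (by positivity)
      (fun p q hpq => (hθ p q hpq).le) (d - 1) (Or.inl rfl)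
      fun l hl _ => (Nat.sub_add_cancel hd).trans_le (Finset.inf'_le _ hl)
    rwa [Nat.sub_add_cancel hd, show (D : ℝ) * (Real.log 2 / (2 * D)) = Real.log 2 / 2 by
      field_simp] at h
  rw [condRootProb_eq_sigmoid hr, rootMarg_eq_half, one_div, ← Real.sigmoid_zero,
    ← Nat.cast_finsetInf']
  calc _ ≤ |val b * subtreeLogRatio G θ L y r r - 0| / 4 := Real.abs_sigmoid_sub_sigmoid_le _ _
    _ ≤ (Real.log 2 / 2) ^ d / 2 := by rw [sub_zero, abs_mul, abs_val, one_mul]; linarith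
    _ < _ := log_two_div_two_pow_div_two_lt d
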